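/- For any real m×n matrix A of rank r and any integer k with 1 ≤ k < r, the rank-k truncated SVD A_k satisfies ‖A − A_k‖_F = min{‖A − B‖_F : rank(B) ≤ k} = √(σ_{k+1}² + ⋯ + σ_r²). -/

import Mathlib

open Matrix BigOperators

noncomputable def singularValue {m n : ℕ} (A : Matrix (Fin m) (Fin n) ℝ) : Fin n → ℝ :=
  fun j =>
    Real.sqrt ((show (Aᵀ * A).IsHermitian by
        simpa only [Matrix.conjTranspose_eq_transpose_of_trivial] using
          Matrix.isHermitian_conjTranspose_mul_self A).eigenvalues
      (Tuple.sort (fun i => -(show (Aᵀ * A).IsHermitian by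
        simpa only [Matrix.conjTranspose_eq_transpose_of_trivial] using
          Matrix.isHermitian_conjTranspose_mul_self A).eigenvalues i) j))

noncomputable def spectralNorm' {m n : ℕ} (A : Matrix (Fin m) (Fin n) ℝ) : ℝ :=
  ‖LinearMap.toContinuousLinearMap (Matrix.toEuclideanLin A)‖

noncomputable def frobNorm {m n : ℕ} (A : Matrix (Fin m) (Fin n) ℝ) : ℝ :=
  Real.sqrt (∑ i, ∑ j, (A i j)^2)

noncomputable def pinv {a b : ℕ} (W : Matrix (Fin a) (Fin b) ℝ) : Matrix (Fin b) (Fin a) ℝ :=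
  if a ≤ b then Wᵀ * (W * Wᵀ)⁻¹ else (Wᵀ * W)⁻¹ * Wᵀ

/-!
The truncation error is computed directly: `A - A_k = Uᵀ diag(0, …, 0, σ_{k+1}, …, σ_r) V`, and
multiplying by a matrix with orthonormal rows does not change the Frobenius norm.

For the lower bound, write `QᵀQ` for the orthogonal projection onto the column space of `B`, where
`Q` has `rank B ≤ k` orthonormal rows. Since `QᵀQ B = B`, Pythagoras gives
`‖A - B‖² ≥ ‖A - QᵀQ A‖² = ‖A‖² - ‖Q A‖²`. With `g_i = ‖Q u_i‖²` we get `‖Q A‖² = ∑ σ_i² g_i`,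
where `0 ≤ g_i ≤ 1` (Bessel) and `∑ g_i ≤ rank B ≤ k`; for decreasing weights `σ_i²` such a sum
is at most `σ_1² + ⋯ + σ_k²`.
-/

theorem Finset.sum_mul_le_sum_of_sum_le_card {ι : Type*} [Fintype ι] (s : Finset ι)
    {w g : ι → ℝ} {c : ℝ} (hc : 0 ≤ c) (hws : ∀ i ∈ s, c ≤ w i) (hwsc : ∀ i ∉ s, w i ≤ c)
    (hg0 : ∀ i, 0 ≤ g i) (hg1 : ∀ i, g i ≤ 1) (hg : ∑ i, g i ≤ s.card) :
    ∑ i, w i * g i ≤ ∑ i ∈ s, w i := by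
  classical
  have hout : ∑ i ∈ sᶜ, w i * g i ≤ c * ∑ i ∈ sᶜ, g i := by
    rw [Finset.mul_sum]
    exact Finset.sum_le_sum fun i hi =>
      mul_le_mul_of_nonneg_right (hwsc i (Finset.mem_compl.mp hi)) (hg0 i)
  have hin : c * ∑ i ∈ s, (1 - g i) ≤ ∑ i ∈ s, w i * (1 - g i) := by
    rw [Finset.mul_sum]
    exact Finset.sum_le_sum fun i hi =>
      mul_le_mul_of_nonneg_right (hws i hi) (by linarith [hg1 i])
  rw [← Finset.sum_add_sum_compl s g] at hg
  rw [← Finset.sum_add_sum_compl s]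
  simp only [Finset.sum_sub_distrib, Finset.sum_const, nsmul_eq_mul, mul_one, mul_sub] at hin
  linarith [mul_le_mul_of_nonneg_left hg hc]

namespace Matrix

variable {l m n r R : Type*}

theorem of_mul_transpose_eq_one [Fintype m] [CommRing R] [DecidableEq r] {u : r → m → R}
    (hu : ∀ i j, ∑ t, u i t * u j t = if i = j then 1 else 0) : of u * (of u)ᵀ = 1 := by
  ext i j
  simpa [mul_apply, one_apply] using hu i j

theorem sum_smul_vecMulVec_eq_mul_diagonal_mul [Fintype r] [CommRing R] [DecidableEq r]
    (u : r → m → R) (v : r → n → R) (σ : r → R) :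
    ∑ i, σ i • vecMulVec (u i) (v i) = (of u)ᵀ * diagonal σ * of v := by
  ext s t
  rw [mul_apply]
  simp only [sum_apply, smul_apply, vecMulVec_apply, mul_diagonal, transpose_apply, of_apply,
    smul_eq_mul]
  exact Finset.sum_congr rfl fun _ _ => by ring

/-- Pythagoras for the orthogonal projection `QᵀQ`, at the level of Gram matrices. -/
theorem transpose_mul_self_eq_add_of_mul_transpose_eq_one [Fintype l] [Fintype m] [CommRing R]
    [DecidableEq l] {Q : Matrix l m R} (hQ : Q * Qᵀ = 1) (X : Matrix m n R) :
    Xᵀ * X = (Q * X)ᵀ * (Q * X) + (X - Qᵀ * Q * X)ᵀ * (X - Qᵀ * Q * X) := by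
  have hQX : Q * (Qᵀ * (Q * X)) = Q * X := by
    rw [← Matrix.mul_assoc Q, hQ, Matrix.one_mul]
  simp only [transpose_sub, transpose_mul, transpose_transpose, Matrix.sub_mul, Matrix.mul_sub,
    Matrix.mul_assoc, hQX]
  abel

theorem trace_transpose_mul_self_mul_diagonal_mul [Fintype m] [Fintype n] [Fintype r]
    [CommRing R] [DecidableEq r] {V : Matrix r n R} (hV : V * Vᵀ = 1) (C : Matrix m r R)
    (σ : r → R) :
    ((C * diagonal σ * V)ᵀ * (C * diagonal σ * V)).trace = ∑ i, σ i ^ 2 * (Cᵀ * C) i i := by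
  have hgram : (C * diagonal σ * V)ᵀ * (C * diagonal σ * V)
      = Vᵀ * ((C * diagonal σ)ᵀ * (C * diagonal σ) * V) := by
    simp only [transpose_mul, Matrix.mul_assoc]
  rw [hgram, trace_mul_comm, Matrix.mul_assoc, hV, Matrix.mul_one, transpose_mul,
    diagonal_transpose, Matrix.mul_assoc, ← Matrix.mul_assoc Cᵀ]
  simp only [trace, diag_apply, diagonal_mul, mul_diagonal]
  exact Finset.sum_congr rfl fun i _ => by ring

theorem diag_transpose_mul_self_nonneg [Fintype m] (M : Matrix m n ℝ) (j : n) :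
    0 ≤ (Mᵀ * M) j j :=
  Finset.sum_nonneg fun _ _ => mul_self_nonneg _

theorem trace_transpose_mul_self_nonneg [Fintype m] [Fintype n] (M : Matrix m n ℝ) :
    0 ≤ (Mᵀ * M).trace :=
  Finset.sum_nonneg fun j _ => diag_transpose_mul_self_nonneg M j

theorem diag_transpose_mul_self_mul_le [Fintype l] [Fintype m] [DecidableEq l]
    {Q : Matrix l m ℝ} (hQ : Q * Qᵀ = 1) (X : Matrix m n ℝ) (j : n) :
    ((Q * X)ᵀ * (Q * X)) j j ≤ (Xᵀ * X) j j := by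
  rw [transpose_mul_self_eq_add_of_mul_transpose_eq_one hQ X, add_apply]
  linarith [diag_transpose_mul_self_nonneg (X - Qᵀ * Q * X) j]

theorem trace_transpose_mul_self_mul_le [Fintype l] [Fintype m] [Fintype n] [DecidableEq l]
    {Q : Matrix l m ℝ} (hQ : Q * Qᵀ = 1) (X : Matrix m n ℝ) :
    ((Q * X)ᵀ * (Q * X)).trace ≤ (Xᵀ * X).trace :=
  Finset.sum_le_sum fun j _ => diag_transpose_mul_self_mul_le hQ X j

theorem trace_transpose_mul_self_sub_le [Fintype l] [Fintype m] [Fintype n] [DecidableEq l]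
    {Q : Matrix l m ℝ} (hQ : Q * Qᵀ = 1) {B : Matrix m n ℝ} (hB : Qᵀ * Q * B = B)
    (A : Matrix m n ℝ) :
    (Aᵀ * A).trace - ((Q * A)ᵀ * (Q * A)).trace ≤ ((A - B)ᵀ * (A - B)).trace := by
  have hA := congrArg trace (transpose_mul_self_eq_add_of_mul_transpose_eq_one hQ A)
  have hAB := congrArg trace (transpose_mul_self_eq_add_of_mul_transpose_eq_one hQ (A - B))
  have hres : A - B - Qᵀ * Q * (A - B) = A - Qᵀ * Q * A := by
    rw [Matrix.mul_sub, hB]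
    abel
  rw [trace_add] at hA hAB
  rw [hres] at hAB
  linarith [trace_transpose_mul_self_nonneg (Q * (A - B))]

theorem exists_orthonormal_rows_mul_eq_self [Fintype m] [Fintype n] (B : Matrix m n ℝ) :
    ∃ (d : ℕ) (Q : Matrix (Fin d) m ℝ), d = B.rank ∧ Q * Qᵀ = 1 ∧ Qᵀ * Q * B = B := by
  let e : (m → ℝ) ≃ₗ[ℝ] EuclideanSpace ℝ m := (WithLp.linearEquiv 2 ℝ (m → ℝ)).symm
  let W : Submodule ℝ (EuclideanSpace ℝ m) :=
    (Submodule.span ℝ (Set.range B.col)).map e.toLinearMap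
  let b := stdOrthonormalBasis ℝ W
  have hinner : ∀ x y : EuclideanSpace ℝ m, inner ℝ x y = ∑ t, x t * y t := by
    intro x y
    simp [PiLp.inner_apply, mul_comm]
  refine ⟨Module.finrank ℝ W, of fun i => (b i : EuclideanSpace ℝ m), ?_, ?_, ?_⟩
  · rw [rank_eq_finrank_span_cols, LinearEquiv.finrank_map_eq]
  · ext i j
    have := orthonormal_iff_ite.mp b.orthonormal i j
    rw [Submodule.coe_inner, hinner] at this
    simpa [mul_apply, one_apply] using this
  · ext t j
    have hmem : e (B.col j) ∈ W := Submodule.mem_map_of_mem (Submodule.subset_span ⟨j, rfl⟩)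
    have hrepr := congrArg (fun x : W => (x : EuclideanSpace ℝ m) t) (b.sum_repr' ⟨_, hmem⟩)
    have he : ∀ s, (e (B.col j)) s = B s j := fun _ => rfl
    simp only [Submodule.coe_inner, hinner, Submodule.coe_sum, Submodule.coe_smul,
      WithLp.ofLp_sum, WithLp.ofLp_smul, Finset.sum_apply, Pi.smul_apply, smul_eq_mul,
      he] at hrepr
    rw [← hrepr]
    simp only [mul_apply, transpose_apply, of_apply, Finset.sum_mul]
    rw [Finset.sum_comm]
    exact Finset.sum_congr rfl fun l _ => Finset.sum_congr rfl fun s _ => by ring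

theorem trace_transpose_mul_self_transpose_mul_diagonal_mul [Fintype m] [Fintype n] [Fintype r]
    [CommRing R] [DecidableEq r] {U : Matrix r m R} {V : Matrix r n R} (hU : U * Uᵀ = 1)
    (hV : V * Vᵀ = 1) (σ : r → R) :
    trace ((Uᵀ * diagonal σ * V)ᵀ * (Uᵀ * diagonal σ * V)) = ∑ i, σ i ^ 2 := by
  rw [trace_transpose_mul_self_mul_diagonal_mul hV]
  simp [hU]

theorem trace_transpose_mul_self_mul_le_sum_sq [Fintype m] [Fintype n] {d k r : ℕ}
    {Q : Matrix (Fin d) m ℝ} {U : Matrix (Fin r) m ℝ} {V : Matrix (Fin r) n ℝ} (hQ : Q * Qᵀ = 1)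
    (hU : U * Uᵀ = 1) (hV : V * Vᵀ = 1) {σ : Fin r → ℝ} (hσ0 : ∀ i, 0 ≤ σ i) (hσ : Antitone σ)
    (hdk : d ≤ k) (hkr : k < r) :
    trace ((Q * (Uᵀ * diagonal σ * V))ᵀ * (Q * (Uᵀ * diagonal σ * V)))
      ≤ ∑ i ∈ {i : Fin r | (i : ℕ) < k}, σ i ^ 2 := by
  set C := Q * Uᵀ
  have hg1 : ∀ i, (Cᵀ * C) i i ≤ 1 := fun i => by
    simpa only [transpose_transpose, hU, one_apply_eq] using
      diag_transpose_mul_self_mul_le hQ Uᵀ i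
  have hgsum : ∑ i, (Cᵀ * C) i i ≤ d :=
    calc ∑ i, (Cᵀ * C) i i = trace (C * Cᵀ) := trace_mul_comm Cᵀ C
      _ = trace ((U * Qᵀ)ᵀ * (U * Qᵀ)) := by simp [C, transpose_mul]
      _ ≤ trace (Qᵀᵀ * Qᵀ) := trace_transpose_mul_self_mul_le hU Qᵀ
      _ = d := by simp [hQ]
  have hσsq : ∀ i j : Fin r, i ≤ j → σ j ^ 2 ≤ σ i ^ 2 := fun i j hij =>
    pow_le_pow_left₀ (hσ0 j) (hσ hij) 2
  have hQA : Q * (Uᵀ * diagonal σ * V) = C * diagonal σ * V := by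
    simp only [C, Matrix.mul_assoc]
  rw [hQA, trace_transpose_mul_self_mul_diagonal_mul hV]
  refine Finset.sum_mul_le_sum_of_sum_le_card _ (sq_nonneg (σ ⟨k, hkr⟩))
    (fun i hi => hσsq _ _ (Fin.le_def.mpr (Finset.mem_filter.mp hi).2.le))
    (fun i hi => hσsq _ _ (Fin.le_def.mpr (by simpa using hi)))
    (diag_transpose_mul_self_nonneg C) hg1 ?_
  rw [Fin.card_filter_val_lt, min_eq_right hkr.le]
  exact hgsum.trans (by exact_mod_cast hdk)

end Matrix

theorem frobNorm_eq_sqrt_trace {m n : ℕ} (M : Matrix (Fin m) (Fin n) ℝ) :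
    frobNorm M = √((Mᵀ * M).trace) := by
  rw [frobNorm, Matrix.trace, Finset.sum_comm]
  simp [Matrix.mul_apply, sq]

theorem truncated_svd_frobenius_opt_general {m n r : ℕ} (A : Matrix (Fin m) (Fin n) ℝ)
    (u : Fin r → Fin m → ℝ) (v : Fin r → Fin n → ℝ) (σ : Fin r → ℝ)
    (hu : ∀ i j : Fin r, (∑ t, u i t * u j t) = if i = j then 1 else 0)
    (hv : ∀ i j : Fin r, (∑ t, v i t * v j t) = if i = j then 1 else 0)
    (hσpos : ∀ i, 0 < σ i) (hσmono : ∀ i j : Fin r, i ≤ j → σ j ≤ σ i)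
    (hsvd : A = ∑ i, σ i • Matrix.vecMulVec (u i) (v i))
    (k : ℕ) (hkr : k < r) :
    frobNorm (A - ∑ i : Fin r, if (i : ℕ) < k then σ i • Matrix.vecMulVec (u i) (v i) else 0)
      = Real.sqrt (∑ i : Fin r, if k ≤ (i : ℕ) then (σ i)^2 else 0) ∧
    ∀ B : Matrix (Fin m) (Fin n) ℝ, B.rank ≤ k →
      Real.sqrt (∑ i : Fin r, if k ≤ (i : ℕ) then (σ i)^2 else 0) ≤ frobNorm (A - B) := by
  have hU := of_mul_transpose_eq_one hu
  have hV := of_mul_transpose_eq_one hv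
  have htail : A - (∑ i : Fin r, if (i : ℕ) < k then σ i • vecMulVec (u i) (v i) else 0)
      = (of u)ᵀ * diagonal (fun i : Fin r => if k ≤ (i : ℕ) then σ i else 0) * of v := by
    rw [hsvd, ← sum_smul_vecMulVec_eq_mul_diagonal_mul, ← Finset.sum_sub_distrib]
    refine Finset.sum_congr rfl fun i _ => ?_
    split_ifs <;> first | omega | simp
  rw [sum_smul_vecMulVec_eq_mul_diagonal_mul] at hsvd
  constructor
  · rw [htail, frobNorm_eq_sqrt_trace, trace_transpose_mul_self_transpose_mul_diagonal_mul hU hV]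
    congr 1
    refine Finset.sum_congr rfl fun i _ => ?_
    split_ifs <;> simp
  · intro B hB
    obtain ⟨_, Q, rfl, hQ, hQB⟩ := exists_orthonormal_rows_mul_eq_self B
    have hsplit : ∑ i, σ i ^ 2 = (∑ i ∈ {i : Fin r | (i : ℕ) < k}, σ i ^ 2)
        + ∑ i : Fin r, if k ≤ (i : ℕ) then σ i ^ 2 else 0 := by
      rw [Finset.sum_filter, ← Finset.sum_add_distrib]
      refine Finset.sum_congr rfl fun i _ => ?_
      split_ifs <;> first | omega | simp
    have hA : trace (Aᵀ * A) = ∑ i, σ i ^ 2 := by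
      rw [hsvd, trace_transpose_mul_self_transpose_mul_diagonal_mul hU hV]
    rw [frobNorm_eq_sqrt_trace]
    apply Real.sqrt_le_sqrt
    have hQA : trace ((Q * A)ᵀ * (Q * A)) ≤ ∑ i ∈ {i : Fin r | (i : ℕ) < k}, σ i ^ 2 := by
      rw [hsvd]
      exact trace_transpose_mul_self_mul_le_sum_sq hQ hU hV (fun i => (hσpos i).le) hσmono hB hkr
    linarith [trace_transpose_mul_self_sub_le hQ hQB A]

/-- Eckart–Young: the rank-k truncated SVD is the best rank-k approximation in
the Frobenius norm, with error √(σ_{k+1}² + ⋯ + σ_r²). -/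
theorem truncated_svd_frobenius_opt {m n r : ℕ} (A : Matrix (Fin m) (Fin n) ℝ)
    (u : Fin r → Fin m → ℝ) (v : Fin r → Fin n → ℝ) (σ : Fin r → ℝ)
    (hA : A.rank = r)
    (hu : ∀ i j : Fin r, (∑ t, u i t * u j t) = if i = j then 1 else 0)
    (hv : ∀ i j : Fin r, (∑ t, v i t * v j t) = if i = j then 1 else 0)
    (hσpos : ∀ i, 0 < σ i) (hσmono : ∀ i j : Fin r, i ≤ j → σ j ≤ σ i)
    (hsvd : A = ∑ i, σ i • Matrix.vecMulVec (u i) (v i))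
    (k : ℕ) (hk1 : 1 ≤ k) (hkr : k < r) :
    frobNorm (A - ∑ i : Fin r, if (i : ℕ) < k then σ i • Matrix.vecMulVec (u i) (v i) else 0)
      = Real.sqrt (∑ i : Fin r, if k ≤ (i : ℕ) then (σ i)^2 else 0) ∧
    ∀ B : Matrix (Fin m) (Fin n) ℝ, B.rank ≤ k →
      Real.sqrt (∑ i : Fin r, if k ≤ (i : ℕ) then (σ i)^2 else 0) ≤ frobNorm (A - B) :=
  truncated_svd_frobenius_opt_general A u v σ hu hv hσpos hσmono hsvd k hkr
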